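/- Let N ≥ 1 and let p_1,...,p_{N+1} be reals with 0 ≤ p_1 ≤ ... ≤ p_{N+1}. Define q_j = min(p_j, 1), s_j(n,i) = p_j·n − q_j·i + c_j for arbitrary reals c_j. Let f̃^n_i be the ultradiscrete permanent of the N×N matrix whose (j,m) entry (m = 1,...,N) is |s_j(n + 2(m−1), i)|, and let g̃^n_i be the ultradiscrete permanent of the (N+1)×(N+1) matrix whose (j,m) entry (m = 1,...,N+1) is |s_j(n + 2(m−2), i)|. Then for all real n, i the two Bäcklund transformations for the ultradiscrete KdV equation hold: (i) f̃^n_i + g̃^{n+1}_i = max( f̃^{n+1}_i + g̃^n_i − p_{N+1}, f̃^{n−1}_i + g̃^{n+2}_i − p_{N+1} ); (ii) f̃^n_i + g̃^{n+1}_{i−1} = max( f̃^{n+1}_{i−1} + g̃^n_i − p_{N+1} − q_{N+1}, f̃^{n−1}_{i−1} + g̃^{n+2}_i − p_{N+1} + q_{N+1} ). -/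
import Mathlib


open Finset

/-- The ultradiscrete permanent of an `M × M` real matrix:
the maximum over all permutations `π` of `Σ_j a j (π j)`. -/
noncomputable def uperm (M : ℕ) (a : Fin M → Fin M → ℝ) : ℝ :=
  Finset.univ.sup' Finset.univ_nonempty fun π : Equiv.Perm (Fin M) => ∑ j, a j (π j)

lemma sum_le_uperm {M : ℕ} (a : Fin M → Fin M → ℝ) (π : Equiv.Perm (Fin M)) :
    (∑ j, a j (π j)) ≤ uperm M a :=
  Finset.le_sup' (f := fun π : Equiv.Perm (Fin M) => ∑ j, a j (π j)) (mem_univ π)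

lemma uperm_le {M : ℕ} (a : Fin M → Fin M → ℝ) {x : ℝ}
    (h : ∀ π : Equiv.Perm (Fin M), (∑ j, a j (π j)) ≤ x) : uperm M a ≤ x :=
  Finset.sup'_le _ _ fun π _ => h π

noncomputable def tau (K : ℕ) (p q c : Fin K → ℝ) (n i : ℝ) : ℝ :=
  uperm K fun j m => |p j * (n + 2 * ((m : ℕ) : ℝ)) - q j * i + c j|

lemma tau_def (K : ℕ) (p q c : Fin K → ℝ) (n i : ℝ) :
    tau K p q c n i = uperm K (fun j m => |p j * (n + 2 * ((m : ℕ) : ℝ)) - q j * i + c j|) := rfl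

lemma sum_le_tau {K : ℕ} (p q c : Fin K → ℝ) (n i : ℝ) (e : Equiv.Perm (Fin K)) :
    (∑ j, |p j * (n + 2 * ((e j : ℕ) : ℝ)) - q j * i + c j|) ≤ tau K p q c n i := by
  exact sum_le_uperm (fun j m => |p j * (n + 2 * ((m : ℕ) : ℝ)) - q j * i + c j|) e

lemma tau_le {K : ℕ} (p q c : Fin K → ℝ) (n i : ℝ) {x : ℝ}
    (h : ∀ e : Equiv.Perm (Fin K),
      (∑ j, |p j * (n + 2 * ((e j : ℕ) : ℝ)) - q j * i + c j|) ≤ x) : tau K p q c n i ≤ x := by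
  rw [tau_def]; exact uperm_le _ h

lemma tau_zero (p q c : Fin 0 → ℝ) (n i : ℝ) : tau 0 p q c n i = 0 := by
  unfold tau uperm; simp

theorem vertex (K : ℕ) (p q c : Fin (K + 1) → ℝ) (hp0 : ∀ j, 0 ≤ p j)
    (hpt : ∀ j, p j ≤ p (Fin.last K)) (n i : ℝ) :
    tau (K + 1) p q c n i =
      max (tau K (p ∘ Fin.castSucc) (q ∘ Fin.castSucc) (c ∘ Fin.castSucc) n i
            + (p (Fin.last K) * (n + 2 * K) - q (Fin.last K) * i + c (Fin.last K)))
          (tau K (p ∘ Fin.castSucc) (q ∘ Fin.castSucc) (c ∘ Fin.castSucc) (n + 2) i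
            - (p (Fin.last K) * n - q (Fin.last K) * i + c (Fin.last K))) := by
  have hcoe : ∀ t : Fin (K+1), ((t : ℕ) : ℝ) ≤ (K : ℝ) := fun t => by exact_mod_cast Fin.is_le t
  apply le_antisymm
  · rw [tau_def]
    apply uperm_le
    intro π
    set a : Fin (K + 1) → Fin (K + 1) → ℝ :=
      fun j m => |p j * (n + 2 * ((m : ℕ) : ℝ)) - q j * i + c j| with ha
    rw [Fin.sum_univ_castSucc]
    set L := Fin.last K with hL
    set t := π L with ht
    by_cases hsgn : 0 ≤ p L * n - q L * i + c L + 2 * p L * ((t : ℕ) : ℝ)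
    · -- positive case : row L goes to column L
      apply le_max_of_le_left
      have haLt : a L t = p L * n - q L * i + c L + 2 * p L * ((t : ℕ) : ℝ) := by
        simp only [ha]
        rw [show p L * (n + 2 * ((t : ℕ) : ℝ)) - q L * i + c L
            = p L * n - q L * i + c L + 2 * p L * ((t : ℕ) : ℝ) by ring]
        exact abs_of_nonneg hsgn
      have himg : ∀ j : Fin K, π j.castSucc ≠ t := fun j hj =>
        absurd (π.injective (hj.trans ht)) (Fin.ne_of_lt (Fin.castSucc_lt_last j))
      have hswapne : ∀ j : Fin K, (Equiv.swap t L) (π j.castSucc) ≠ L := by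
        intro j hj
        rw [Equiv.swap_apply_eq_iff, Equiv.swap_apply_right] at hj
        exact himg j hj
      set ρ : Fin K → Fin K := fun j => Fin.castPred _ (hswapne j) with hρ
      have hρc : ∀ j, (ρ j).castSucc = (Equiv.swap t L) (π j.castSucc) := by
        intro j; simp only [hρ, Fin.castSucc_castPred]
      have hρinj : Function.Injective ρ := by
        intro x y hxy
        have h2 : (Equiv.swap t L) (π x.castSucc) = (Equiv.swap t L) (π y.castSucc) := by
          rw [← hρc, ← hρc, hxy]
        exact Fin.castSucc_injective _ (π.injective ((Equiv.swap t L).injective h2))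
      set e : Equiv.Perm (Fin K) := Equiv.ofBijective ρ ((Finite.injective_iff_bijective).mp hρinj)
        with he
      have hev : ∀ j : Fin K, e j = ρ j := fun j => rfl
      have hGsum : (∑ j : Fin K, a j.castSucc ((Equiv.swap t L) (π j.castSucc)))
          ≤ tau K (p ∘ Fin.castSucc) (q ∘ Fin.castSucc) (c ∘ Fin.castSucc) n i := by
        refine le_trans (le_of_eq ?_) (sum_le_tau _ _ _ _ _ e)
        apply Finset.sum_congr rfl
        intro j _
        rw [← hρc j, ha]
        simp [hev, Function.comp]
      -- exchange
      have hexch : (∑ j : Fin K, a j.castSucc (π j.castSucc)) + a L t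
          ≤ (∑ j : Fin K, a j.castSucc ((Equiv.swap t L) (π j.castSucc)))
            + (p L * (n + 2 * K) - q L * i + c L) := by
        by_cases htL : t = L
        · have heq : (∑ j : Fin K, a j.castSucc (π j.castSucc))
              = ∑ j : Fin K, a j.castSucc ((Equiv.swap t L) (π j.castSucc)) := by
            apply Finset.sum_congr rfl; intro j _; rw [htL, Equiv.swap_self]; rfl
          rw [heq, haLt]
          have h2 : 2 * p L * ((t : ℕ) : ℝ) ≤ 2 * p L * (K : ℝ) := by
            apply mul_le_mul_of_nonneg_left (hcoe t); linarith [hp0 L]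
          linarith
        · have hπL : π.symm L ≠ L := by
            intro h
            have := congrArg π h
            simp only [Equiv.apply_symm_apply] at this
            exact htL (ht.trans this.symm)
          set j1 : Fin K := Fin.castPred _ hπL with hj1
          have hj1v : π j1.castSucc = L := by
            simp only [hj1, Fin.castSucc_castPred, Equiv.apply_symm_apply]
          have hFG : ∀ j ∈ univ.erase j1, a j.castSucc (π j.castSucc)
              = a j.castSucc ((Equiv.swap t L) (π j.castSucc)) := by
            intro j hj
            rw [mem_erase] at hj
            have hne : π j.castSucc ≠ L := fun h =>
              hj.1 (Fin.castSucc_injective _ (π.injective (h.trans hj1v.symm)))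
            rw [Equiv.swap_apply_of_ne_of_ne (himg j) hne]
          rw [← Finset.add_sum_erase univ (fun j => a j.castSucc (π j.castSucc)) (mem_univ j1),
              ← Finset.add_sum_erase univ
                (fun j => a j.castSucc ((Equiv.swap t L) (π j.castSucc))) (mem_univ j1),
              Finset.sum_congr rfl hFG]
          have hFj1 : a j1.castSucc (π j1.castSucc)
              = |p j1.castSucc * (n + 2 * (K : ℝ)) - q j1.castSucc * i + c j1.castSucc| := by
            rw [hj1v, ha]; simp [hL]
          have hGj1 : a j1.castSucc ((Equiv.swap t L) (π j1.castSucc))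
              = |p j1.castSucc * (n + 2 * ((t : ℕ) : ℝ)) - q j1.castSucc * i + c j1.castSucc| := by
            rw [hj1v, Equiv.swap_apply_right, ha]
          have hlip : a j1.castSucc (π j1.castSucc)
              - a j1.castSucc ((Equiv.swap t L) (π j1.castSucc))
              ≤ 2 * p L * ((K : ℝ) - ((t : ℕ) : ℝ)) := by
            rw [hFj1, hGj1]
            have h1 := abs_sub_abs_le_abs_sub
              (p j1.castSucc * (n + 2 * (K : ℝ)) - q j1.castSucc * i + c j1.castSucc)
              (p j1.castSucc * (n + 2 * ((t : ℕ) : ℝ)) - q j1.castSucc * i + c j1.castSucc)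
            rw [show (p j1.castSucc * (n + 2 * (K : ℝ)) - q j1.castSucc * i + c j1.castSucc)
                - (p j1.castSucc * (n + 2 * ((t : ℕ) : ℝ)) - q j1.castSucc * i + c j1.castSucc)
                = 2 * p j1.castSucc * ((K : ℝ) - ((t : ℕ) : ℝ)) by ring] at h1
            have h3 : |2 * p j1.castSucc * ((K : ℝ) - ((t : ℕ) : ℝ))|
                = 2 * p j1.castSucc * ((K : ℝ) - ((t : ℕ) : ℝ)) := by
              apply abs_of_nonneg
              have h5 := hp0 j1.castSucc
              have h6 := hcoe t
              nlinarith
            have h4 : 2 * p j1.castSucc * ((K : ℝ) - ((t : ℕ) : ℝ))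
                ≤ 2 * p L * ((K : ℝ) - ((t : ℕ) : ℝ)) := by
              apply mul_le_mul_of_nonneg_right _ (by linarith [hcoe t])
              linarith [hpt j1.castSucc]
            linarith
          rw [haLt]
          linarith
      refine le_trans hexch ?_
      linarith [hGsum]
    · -- negative case : row L goes to column 0
      apply le_max_of_le_right
      push_neg at hsgn
      have ht0 : (0 : ℝ) ≤ ((t : ℕ) : ℝ) := by positivity
      have haLt : a L t = -(p L * n - q L * i + c L + 2 * p L * ((t : ℕ) : ℝ)) := by
        simp only [ha]
        rw [show p L * (n + 2 * ((t : ℕ) : ℝ)) - q L * i + c L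
            = p L * n - q L * i + c L + 2 * p L * ((t : ℕ) : ℝ) by ring]
        exact abs_of_neg hsgn
      have himg : ∀ j : Fin K, π j.castSucc ≠ t := fun j hj =>
        absurd (π.injective (hj.trans ht)) (Fin.ne_of_lt (Fin.castSucc_lt_last j))
      have hswapne : ∀ j : Fin K, (Equiv.swap t (0 : Fin (K+1))) (π j.castSucc) ≠ 0 := by
        intro j hj
        rw [Equiv.swap_apply_eq_iff, Equiv.swap_apply_right] at hj
        exact himg j hj
      set ρ : Fin K → Fin K := fun j => Fin.pred _ (hswapne j) with hρ
      have hρc : ∀ j, (ρ j).succ = (Equiv.swap t (0 : Fin (K+1))) (π j.castSucc) := by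
        intro j; simp only [hρ, Fin.succ_pred]
      have hρinj : Function.Injective ρ := by
        intro x y hxy
        have h2 : (Equiv.swap t (0 : Fin (K+1))) (π x.castSucc)
            = (Equiv.swap t (0 : Fin (K+1))) (π y.castSucc) := by
          rw [← hρc, ← hρc, hxy]
        exact Fin.castSucc_injective _ (π.injective ((Equiv.swap t 0).injective h2))
      set e : Equiv.Perm (Fin K) := Equiv.ofBijective ρ ((Finite.injective_iff_bijective).mp hρinj)
        with he
      have hev : ∀ j : Fin K, e j = ρ j := fun j => rfl
      have hGsum : (∑ j : Fin K, a j.castSucc ((Equiv.swap t (0 : Fin (K+1))) (π j.castSucc)))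
          ≤ tau K (p ∘ Fin.castSucc) (q ∘ Fin.castSucc) (c ∘ Fin.castSucc) (n + 2) i := by
        refine le_trans (le_of_eq ?_) (sum_le_tau _ _ _ _ _ e)
        apply Finset.sum_congr rfl
        intro j _
        rw [← hρc j, ha]
        have hcoesucc : (((ρ j).succ : ℕ) : ℝ) = ((ρ j : ℕ) : ℝ) + 1 := by
          simp [Fin.val_succ]
        simp only [hcoesucc, hev, Function.comp]
        rw [show p j.castSucc * (n + 2 * (((ρ j : ℕ) : ℝ) + 1))
            = p j.castSucc * (n + 2 + 2 * ((ρ j : ℕ) : ℝ)) by ring]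
      have hexch : (∑ j : Fin K, a j.castSucc (π j.castSucc)) + a L t
          ≤ (∑ j : Fin K, a j.castSucc ((Equiv.swap t (0 : Fin (K+1))) (π j.castSucc)))
            - (p L * n - q L * i + c L) := by
        by_cases htL : t = 0
        · have heq : (∑ j : Fin K, a j.castSucc (π j.castSucc))
              = ∑ j : Fin K, a j.castSucc ((Equiv.swap t (0 : Fin (K+1))) (π j.castSucc)) := by
            apply Finset.sum_congr rfl; intro j _; rw [htL, Equiv.swap_self]; rfl
          rw [heq, haLt]
          have htv : ((t : ℕ) : ℝ) = 0 := by rw [htL]; simp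
          rw [htv]
          linarith
        · have hπ0 : π.symm (0 : Fin (K+1)) ≠ Fin.last K := by
            intro h
            apply htL
            have h2 := congrArg π h
            simp only [Equiv.apply_symm_apply] at h2
            rw [ht, ← h2]
          set j1 : Fin K := Fin.castPred _ hπ0 with hj1
          have hj1v : π j1.castSucc = 0 := by
            simp only [hj1, Fin.castSucc_castPred, Equiv.apply_symm_apply]
          have hFG : ∀ j ∈ univ.erase j1, a j.castSucc (π j.castSucc)
              = a j.castSucc ((Equiv.swap t (0 : Fin (K+1))) (π j.castSucc)) := by
            intro j hj
            rw [mem_erase] at hj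
            have hne : π j.castSucc ≠ 0 := fun h =>
              hj.1 (Fin.castSucc_injective _ (π.injective (h.trans hj1v.symm)))
            rw [Equiv.swap_apply_of_ne_of_ne (himg j) hne]
          rw [← Finset.add_sum_erase univ (fun j => a j.castSucc (π j.castSucc)) (mem_univ j1),
              ← Finset.add_sum_erase univ
                (fun j => a j.castSucc ((Equiv.swap t (0 : Fin (K+1))) (π j.castSucc)))
                (mem_univ j1),
              Finset.sum_congr rfl hFG]
          have hFj1 : a j1.castSucc (π j1.castSucc)
              = |p j1.castSucc * n - q j1.castSucc * i + c j1.castSucc| := by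
            rw [hj1v, ha]
            norm_num
          have hGj1 : a j1.castSucc ((Equiv.swap t (0 : Fin (K+1))) (π j1.castSucc))
              = |p j1.castSucc * (n + 2 * ((t : ℕ) : ℝ)) - q j1.castSucc * i + c j1.castSucc| := by
            rw [hj1v, Equiv.swap_apply_right, ha]
          have hlip : a j1.castSucc (π j1.castSucc)
              - a j1.castSucc ((Equiv.swap t (0 : Fin (K+1))) (π j1.castSucc))
              ≤ 2 * p L * ((t : ℕ) : ℝ) := by
            rw [hFj1, hGj1]
            have h1 := abs_sub_abs_le_abs_sub
              (p j1.castSucc * n - q j1.castSucc * i + c j1.castSucc)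
              (p j1.castSucc * (n + 2 * ((t : ℕ) : ℝ)) - q j1.castSucc * i + c j1.castSucc)
            rw [show (p j1.castSucc * n - q j1.castSucc * i + c j1.castSucc)
                - (p j1.castSucc * (n + 2 * ((t : ℕ) : ℝ)) - q j1.castSucc * i + c j1.castSucc)
                = -(2 * p j1.castSucc * ((t : ℕ) : ℝ)) by ring, abs_neg] at h1
            have h3 : |2 * p j1.castSucc * ((t : ℕ) : ℝ)|
                = 2 * p j1.castSucc * ((t : ℕ) : ℝ) := by
              apply abs_of_nonneg
              have h5 := hp0 j1.castSucc
              nlinarith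
            have h4 : 2 * p j1.castSucc * ((t : ℕ) : ℝ) ≤ 2 * p L * ((t : ℕ) : ℝ) := by
              apply mul_le_mul_of_nonneg_right _ ht0
              linarith [hpt j1.castSucc]
            linarith
          rw [haLt]
          linarith
      refine le_trans hexch ?_
      linarith [hGsum]
  · -- max ≤ uperm
    apply max_le
    · -- branch 1
      rw [show tau K (p ∘ Fin.castSucc) (q ∘ Fin.castSucc) (c ∘ Fin.castSucc) n i
            + (p (Fin.last K) * (n + 2 * K) - q (Fin.last K) * i + c (Fin.last K))
          ≤ tau (K+1) p q c n i
          ↔ tau K (p ∘ Fin.castSucc) (q ∘ Fin.castSucc) (c ∘ Fin.castSucc) n i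
          ≤ tau (K+1) p q c n i
            - (p (Fin.last K) * (n + 2 * K) - q (Fin.last K) * i + c (Fin.last K))
          by constructor <;> intro h <;> linarith]
      apply tau_le
      intro ρ
      set g : Fin (K + 1) → Fin (K + 1) :=
        Fin.lastCases (Fin.last K) (fun j => (ρ j).castSucc) with hg
      have hglast : g (Fin.last K) = Fin.last K := by simp [hg]
      have hgcast : ∀ j : Fin K, g j.castSucc = (ρ j).castSucc := by
        intro j; simp [hg]
      have hginj : Function.Injective g := by
        intro x y hxy
        induction x using Fin.lastCases with
        | last =>
          induction y using Fin.lastCases with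
          | last => rfl
          | cast y =>
            rw [hglast, hgcast] at hxy
            exact absurd hxy.symm (Fin.ne_of_lt (Fin.castSucc_lt_last (ρ y)))
        | cast x =>
          induction y using Fin.lastCases with
          | last =>
            rw [hglast, hgcast] at hxy
            exact absurd hxy (Fin.ne_of_lt (Fin.castSucc_lt_last (ρ x)))
          | cast y =>
            rw [hgcast, hgcast] at hxy
            rw [ρ.injective (Fin.castSucc_injective _ hxy)]
      set E : Equiv.Perm (Fin (K+1)) :=
        Equiv.ofBijective g ((Finite.injective_iff_bijective).mp hginj) with hE
      have hEv : ∀ x, E x = g x := fun x => rfl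
      have hbig := sum_le_uperm
        (fun j m => |p j * (n + 2 * ((m : ℕ) : ℝ)) - q j * i + c j|) E
      rw [Fin.sum_univ_castSucc] at hbig
      rw [tau_def (K+1)]
      have hlastterm : |p (Fin.last K) * (n + 2 * (((E (Fin.last K)) : ℕ) : ℝ))
          - q (Fin.last K) * i + c (Fin.last K)|
          ≥ p (Fin.last K) * (n + 2 * (K : ℝ)) - q (Fin.last K) * i + c (Fin.last K) := by
        rw [hEv, hglast]
        simp only [Fin.val_last]
        exact le_abs_self _
      have hterms : ∀ j : Fin K,
          |p j.castSucc * (n + 2 * (((E j.castSucc) : ℕ) : ℝ)) - q j.castSucc * i + c j.castSucc|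
          = |(p ∘ Fin.castSucc) j * (n + 2 * ((ρ j : ℕ) : ℝ)) - (q ∘ Fin.castSucc) j * i
              + (c ∘ Fin.castSucc) j| := by
        intro j
        rw [hEv, hgcast]
        simp [Function.comp]
      calc (∑ j : Fin K, |(p ∘ Fin.castSucc) j * (n + 2 * ((ρ j : ℕ) : ℝ))
              - (q ∘ Fin.castSucc) j * i + (c ∘ Fin.castSucc) j|)
          = ∑ j : Fin K, |p j.castSucc * (n + 2 * (((E j.castSucc) : ℕ) : ℝ))
              - q j.castSucc * i + c j.castSucc| := by
            exact (Finset.sum_congr rfl fun j _ => (hterms j)).symm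
        _ ≤ _ := by linarith [hbig, hlastterm]
    · -- branch 2
      rw [show tau K (p ∘ Fin.castSucc) (q ∘ Fin.castSucc) (c ∘ Fin.castSucc) (n + 2) i
            - (p (Fin.last K) * n - q (Fin.last K) * i + c (Fin.last K))
          ≤ tau (K+1) p q c n i
          ↔ tau K (p ∘ Fin.castSucc) (q ∘ Fin.castSucc) (c ∘ Fin.castSucc) (n + 2) i
          ≤ tau (K+1) p q c n i
            + (p (Fin.last K) * n - q (Fin.last K) * i + c (Fin.last K))
          by constructor <;> intro h <;> linarith]
      apply tau_le
      intro ρ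
      set g : Fin (K + 1) → Fin (K + 1) :=
        Fin.lastCases (0 : Fin (K+1)) (fun j => (ρ j).succ) with hg
      have hglast : g (Fin.last K) = 0 := by simp [hg]
      have hgcast : ∀ j : Fin K, g j.castSucc = (ρ j).succ := by
        intro j; simp [hg]
      have hginj : Function.Injective g := by
        intro x y hxy
        induction x using Fin.lastCases with
        | last =>
          induction y using Fin.lastCases with
          | last => rfl
          | cast y =>
            rw [hglast, hgcast] at hxy
            exact absurd hxy.symm (Fin.succ_ne_zero (ρ y))
        | cast x =>
          induction y using Fin.lastCases with
          | last =>
            rw [hglast, hgcast] at hxy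
            exact absurd hxy (Fin.succ_ne_zero (ρ x))
          | cast y =>
            rw [hgcast, hgcast] at hxy
            rw [ρ.injective (Fin.succ_injective _ hxy)]
      set E : Equiv.Perm (Fin (K+1)) :=
        Equiv.ofBijective g ((Finite.injective_iff_bijective).mp hginj) with hE
      have hEv : ∀ x, E x = g x := fun x => rfl
      have hbig := sum_le_uperm
        (fun j m => |p j * (n + 2 * ((m : ℕ) : ℝ)) - q j * i + c j|) E
      rw [Fin.sum_univ_castSucc] at hbig
      rw [tau_def (K+1)]
      have hlastterm : |p (Fin.last K) * (n + 2 * (((E (Fin.last K)) : ℕ) : ℝ))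
          - q (Fin.last K) * i + c (Fin.last K)|
          ≥ -(p (Fin.last K) * n - q (Fin.last K) * i + c (Fin.last K)) := by
        rw [hEv, hglast]
        have hz : p (Fin.last K) * (n + 2 * ((((0 : Fin (K+1))) : ℕ) : ℝ))
            - q (Fin.last K) * i + c (Fin.last K)
            = p (Fin.last K) * n - q (Fin.last K) * i + c (Fin.last K) := by
          norm_num
        rw [hz]
        exact neg_le_abs _
      have hterms : ∀ j : Fin K,
          |p j.castSucc * (n + 2 * (((E j.castSucc) : ℕ) : ℝ)) - q j.castSucc * i + c j.castSucc|
          = |(p ∘ Fin.castSucc) j * (n + 2 + 2 * ((ρ j : ℕ) : ℝ)) - (q ∘ Fin.castSucc) j * i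
              + (c ∘ Fin.castSucc) j| := by
        intro j
        rw [hEv, hgcast]
        simp only [Fin.val_succ, Function.comp]
        rw [show (((ρ j : ℕ) + 1 : ℕ) : ℝ) = ((ρ j : ℕ) : ℝ) + 1 by push_cast; ring,
          show p j.castSucc * (n + 2 * (((ρ j : ℕ) : ℝ) + 1))
            = p j.castSucc * (n + 2 + 2 * ((ρ j : ℕ) : ℝ)) by ring]
      calc (∑ j : Fin K, |(p ∘ Fin.castSucc) j * (n + 2 + 2 * ((ρ j : ℕ) : ℝ))
              - (q ∘ Fin.castSucc) j * i + (c ∘ Fin.castSucc) j|)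
          = ∑ j : Fin K, |p j.castSucc * (n + 2 * (((E j.castSucc) : ℕ) : ℝ))
              - q j.castSucc * i + c j.castSucc| := by
            exact (Finset.sum_congr rfl fun j _ => (hterms j)).symm
        _ ≤ _ := by linarith [hbig, hlastterm]

lemma max_add_max_le {a a' b b' x : ℝ} (h1 : a + b ≤ x) (h2 : a + b' ≤ x)
    (h3 : a' + b ≤ x) (h4 : a' + b' ≤ x) : max a a' + max b b' ≤ x := by
  rcases max_cases a a' with ⟨ha, _⟩ | ⟨ha, _⟩ <;> rcases max_cases b b' with ⟨hb, _⟩ | ⟨hb, _⟩ <;>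
    rw [ha, hb] <;> assumption

lemma sub_min_mono {r P : ℝ} (h : r ≤ P) : r - min r 1 ≤ P - min P 1 := by
  rcases le_total r 1 with h1 | h1 <;> rcases le_total P 1 with h2 | h2 <;>
    simp [min_eq_left, min_eq_right, h1, h2] <;> linarith

lemma invariants (K : ℕ) : ∀ (p q c : Fin K → ℝ) (P : ℝ),
    (∀ j, 0 ≤ p j) → Monotone p → (∀ j, q j = min (p j) 1) → (∀ j, p j ≤ P) → 0 ≤ P →
    ∀ n i : ℝ,
    (tau K p q c (n+3) i + tau K p q c n i
        ≤ tau K p q c (n+1) i + tau K p q c (n+2) i + 2*P) ∧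
    (tau K p q c (n+1) (i-1) + tau K p q c (n-2) i
        ≤ tau K p q c (n-1) (i-1) + tau K p q c n i + 2*P + 2*min P 1) ∧
    (tau K p q c (n-1) (i-1) + tau K p q c (n+2) i
        ≤ tau K p q c (n+1) (i-1) + tau K p q c n i + 2*P - 2*min P 1) := by
  induction K with
  | zero =>
    intro p q c P hp0 hmono hq hP hP0 n i
    have hm0 : 0 ≤ min P 1 := le_min hP0 (by norm_num)
    have hm1 : min P 1 ≤ P := min_le_left _ _
    refine ⟨?_, ?_, ?_⟩ <;> simp only [tau_zero] <;> linarith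
  | succ K ih =>
    intro p q c P hp0 hmono hq hP hP0 n i
    set r := p (Fin.last K) with hr
    set s := q (Fin.last K) with hs
    have hsr : s = min r 1 := hq (Fin.last K)
    have hr0 : 0 ≤ r := hp0 _
    have hrP : r ≤ P := hP _
    have hs0 : 0 ≤ s := by rw [hsr]; exact le_min hr0 (by norm_num)
    have hsQ : s ≤ min P 1 := by rw [hsr]; exact min_le_min hrP le_rfl
    have hsr' : r - s ≤ P - min P 1 := by rw [hsr]; exact sub_min_mono hrP
    have hsr2 : s ≤ r := by rw [hsr]; exact min_le_left _ _
    set p' := p ∘ Fin.castSucc with hp'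
    set q' := q ∘ Fin.castSucc with hq'
    set c' := c ∘ Fin.castSucc with hc'
    have hvert : ∀ n' i' : ℝ, tau (K+1) p q c n' i' =
        max (tau K p' q' c' n' i' + (r * (n' + 2 * K) - s * i' + c (Fin.last K)))
            (tau K p' q' c' (n' + 2) i' - (r * n' - s * i' + c (Fin.last K))) := by
      intro n' i'
      exact vertex K p q c hp0 (fun j => hmono (Fin.le_last j)) n' i'
    have hmono' : Monotone p' := fun a b hab =>
      hmono ((Fin.castSucc_le_castSucc_iff).mpr hab)
    have ihs := fun (n' i' : ℝ) => ih p' q' c' r (fun j => hp0 _) hmono'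
      (fun j => hq _) (fun j => hmono (Fin.le_last j.castSucc)) hr0 n' i'
    have hsmin : min r 1 = s := hsr.symm
    -- instances (with min r 1 rewritten to s)
    have S1a := (ihs n i).1
    have S1b := (ihs (n+2) i).1
    have T2a := (ihs n i).2.1
    have T2b := (ihs (n+2) i).2.1
    have T3a := (ihs n i).2.2
    have T3b := (ihs (n+2) i).2.2
    rw [hsmin] at T2a T2b T3a T3b
    have hnn : (n+2) + 1 = n + 3 := by ring
    have hnn2 : (n+2) - 2 = n := by ring
    have hnn3 : (n+2) - 1 = n + 1 := by ring
    have hnn4 : (n+2) + 2 = n + 4 := by ring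
    have hnn5 : (n+2) + 3 = n + 5 := by ring
    simp only [hnn, hnn2, hnn3, hnn4, hnn5] at S1b T2b T3b
    refine ⟨?_, ?_, ?_⟩
    · -- S1 at level K+1
      rw [hvert (n+3) i, hvert n i, hvert (n+1) i, hvert (n+2) i]
      apply max_add_max_le
      · refine le_trans ?_ (add_le_add (add_le_add (le_max_left _ _) (le_max_left _ _)) le_rfl)
        ring_nf
        ring_nf at S1a
        linarith [S1a]
      · refine le_trans ?_ (add_le_add (add_le_add (le_max_right _ _) (le_max_left _ _)) le_rfl)
        ring_nf
        linarith
      · refine le_trans ?_ (add_le_add (add_le_add (le_max_left _ _) (le_max_right _ _)) le_rfl)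
        ring_nf
        ring_nf at S1a S1b
        linarith [S1a, S1b]
      · refine le_trans ?_ (add_le_add (add_le_add (le_max_right _ _) (le_max_right _ _)) le_rfl)
        ring_nf
        ring_nf at S1b
        linarith [S1b]
    · -- T2 at level K+1
      rw [hvert (n+1) (i-1), hvert (n-2) i, hvert (n-1) (i-1), hvert n i]
      apply max_add_max_le
      · refine le_trans ?_
          (add_le_add (add_le_add (add_le_add (le_max_left _ _) (le_max_left _ _)) le_rfl) le_rfl)
        ring_nf
        ring_nf at T2a
        linarith [T2a]
      · refine le_trans ?_
          (add_le_add (add_le_add (add_le_add (le_max_right _ _) (le_max_left _ _)) le_rfl) le_rfl)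
        ring_nf
        linarith
      · refine le_trans ?_
          (add_le_add (add_le_add (add_le_add (le_max_left _ _) (le_max_right _ _)) le_rfl) le_rfl)
        ring_nf
        ring_nf at T2a T2b
        linarith [T2a, T2b]
      · refine le_trans ?_
          (add_le_add (add_le_add (add_le_add (le_max_right _ _) (le_max_right _ _)) le_rfl) le_rfl)
        ring_nf
        ring_nf at T2b
        linarith [T2b]
    · -- T3 at level K+1
      rw [hvert (n-1) (i-1), hvert (n+2) i, hvert (n+1) (i-1), hvert n i]
      apply max_add_max_le
      · refine le_trans ?_
          (sub_le_sub_right (add_le_add (add_le_add (le_max_left _ _) (le_max_left _ _)) le_rfl) _)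
        ring_nf
        ring_nf at T3a
        linarith [T3a]
      · refine le_trans ?_
          (sub_le_sub_right (add_le_add (add_le_add (le_max_right _ _) (le_max_left _ _)) le_rfl) _)
        ring_nf
        ring_nf at T3a T3b
        linarith [T3a, T3b]
      · refine le_trans ?_
          (sub_le_sub_right (add_le_add (add_le_add (le_max_left _ _) (le_max_right _ _)) le_rfl) _)
        ring_nf
        linarith
      · refine le_trans ?_
          (sub_le_sub_right (add_le_add (add_le_add (le_max_right _ _) (le_max_right _ _)) le_rfl) _)
        ring_nf
        ring_nf at T3b
        linarith [T3b]

theorem ukdv_backlund_transformations (N : ℕ) (hN : 1 ≤ N) (p c : Fin (N + 1) → ℝ)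
    (hp0 : ∀ j, 0 ≤ p j) (hpmono : Monotone p)
    (q : Fin (N + 1) → ℝ) (hq : ∀ j, q j = min (p j) 1)
    (f g : ℝ → ℝ → ℝ)
    (hf : ∀ n i : ℝ, f n i = uperm N fun j m =>
      |p j.castSucc * (n + 2 * ((m : ℕ) : ℝ)) - q j.castSucc * i + c j.castSucc|)
    (hg : ∀ n i : ℝ, g n i = uperm (N + 1) fun j m =>
      |p j * (n + 2 * ((m : ℕ) : ℝ) - 2) - q j * i + c j|) :
    ∀ n i : ℝ,
      (f n i + g (n + 1) i =
        max (f (n + 1) i + g n i - p (Fin.last N))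
            (f (n - 1) i + g (n + 2) i - p (Fin.last N))) ∧
      (f n i + g (n + 1) (i - 1) =
        max (f (n + 1) (i - 1) + g n i - p (Fin.last N) - q (Fin.last N))
            (f (n - 1) (i - 1) + g (n + 2) i - p (Fin.last N) + q (Fin.last N))) := by
  intro n i
  set p' := p ∘ Fin.castSucc with hp'
  set q' := q ∘ Fin.castSucc with hq'
  set c' := c ∘ Fin.castSucc with hc'
  have hfe : ∀ n' i' : ℝ, f n' i' = tau N p' q' c' n' i' := by
    intro n' i'
    rw [hf, tau_def]
    rfl
  have hge : ∀ n' i' : ℝ, g n' i' = tau (N + 1) p q c (n' - 2) i' := by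
    intro n' i'
    rw [hg, tau_def]
    congr 1
    funext j m
    congr 1
    ring
  have hvert := fun (n' i' : ℝ) =>
    vertex N p q c hp0 (fun j => hpmono (Fin.le_last j)) n' i'
  have hp0' : ∀ j, 0 ≤ p' j := fun j => hp0 _
  have hmono' : Monotone p' := fun a b hab => hpmono ((Fin.castSucc_le_castSucc_iff).mpr hab)
  have hq'' : ∀ j, q' j = min (p' j) 1 := fun j => hq _
  have hP' : ∀ j, p' j ≤ p (Fin.last N) := fun j => hpmono (Fin.le_last j.castSucc)
  have inv := invariants N p' q' c' (p (Fin.last N)) hp0' hmono' hq'' hP' (hp0 _)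
  have hQmin : min (p (Fin.last N)) 1 = q (Fin.last N) := (hq _).symm
  have S1a := (inv (n - 2) i).1
  simp only [show (n:ℝ) - 2 + 3 = n + 1 by ring, show (n:ℝ) - 2 + 1 = n - 1 by ring,
    show (n:ℝ) - 2 + 2 = n by ring] at S1a
  have S1b := (inv (n - 1) i).1
  simp only [show (n:ℝ) - 1 + 3 = n + 2 by ring, show (n:ℝ) - 1 + 1 = n by ring,
    show (n:ℝ) - 1 + 2 = n + 1 by ring] at S1b
  have T2a := (inv n i).2.1
  have T3a := (inv n i).2.2
  rw [hQmin] at T2a T3a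
  constructor
  · -- identity (i)
    rw [hfe n i, hfe (n + 1) i, hfe (n - 1) i, hge (n + 1) i, hge n i, hge (n + 2) i,
      show (n:ℝ) + 1 - 2 = n - 1 by ring, show (n:ℝ) + 2 - 2 = n by ring,
      hvert (n - 1) i, hvert (n - 2) i, hvert n i,
      show (n:ℝ) - 1 + 2 = n + 1 by ring, show (n:ℝ) - 2 + 2 = n by ring]
    rw [← max_add_add_left, ← max_add_add_left, ← max_add_add_left,
      ← max_sub_sub_right, ← max_sub_sub_right]
    apply le_antisymm
    · apply max_le
      · exact le_max_of_le_right (le_max_of_le_left (by linarith))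
      · exact le_max_of_le_left (le_max_of_le_right (by linarith))
    · apply max_le
      · apply max_le
        · exact le_max_of_le_left (by linarith [S1a])
        · exact le_max_of_le_right (by linarith)
      · apply max_le
        · exact le_max_of_le_left (by linarith)
        · exact le_max_of_le_right (by linarith [S1b])
  · -- identity (ii)
    rw [hfe n i, hfe (n + 1) (i - 1), hfe (n - 1) (i - 1), hge (n + 1) (i - 1), hge n i,
      hge (n + 2) i,
      show (n:ℝ) + 1 - 2 = n - 1 by ring, show (n:ℝ) + 2 - 2 = n by ring,
      hvert (n - 1) (i - 1), hvert (n - 2) i, hvert n i,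
      show (n:ℝ) - 1 + 2 = n + 1 by ring, show (n:ℝ) - 2 + 2 = n by ring]
    rw [← max_add_add_left, ← max_add_add_left, ← max_add_add_left,
      ← max_sub_sub_right, ← max_sub_sub_right, ← max_sub_sub_right, ← max_add_add_right]
    apply le_antisymm
    · apply max_le
      · exact le_max_of_le_right (le_max_of_le_left (by linarith))
      · exact le_max_of_le_left (le_max_of_le_right (by linarith))
    · apply max_le
      · apply max_le
        · exact le_max_of_le_left (by linarith [T2a])
        · exact le_max_of_le_right (by linarith)
      · apply max_le
        · exact le_max_of_le_left (by linarith)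
        · exact le_max_of_le_right (by linarith [T3a])
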